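/- arXiv:2202.12173 — 4 statements merged into one kernel-verified Lean document; each statement's English description precedes it below -/
import Mathlib

section
/- For every natural number d ≥ 1, the equation -(k^{d+1})/(d+1) + (k+1)^d = 0 has a unique solution k ≥ 0, and this solution satisfies k ≥ d + 1. -/
/-!
Writing `k ^ (d + 1) / (k + 1) ^ d = k * (k / (k + 1)) ^ d` shows that this quotient is strictly
increasing on `k ≥ 0`, and the equation says exactly that it equals `d + 1`. Hence there is at most
one root; one exists in `[d + 1, 2 ^ d (d + 1)]` by the intermediate value theorem, since the
quotient is at most `k` and, for `k ≥ 1`, at least `k / 2 ^ d`.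
-/

open Set

lemma pow_succ_div_pow_eq_mul_div_pow (d : ℕ) (k : ℝ) :
    k ^ (d + 1) / (k + 1) ^ d = k * (k / (k + 1)) ^ d := by
  rw [div_pow, pow_succ', mul_div_assoc]

lemma strictMonoOn_pow_succ_div_pow (d : ℕ) :
    StrictMonoOn (fun k : ℝ => k ^ (d + 1) / (k + 1) ^ d) (Ici 0) := by
  intro a (ha : 0 ≤ a) b (hb : 0 ≤ b) hab
  have hratio : a / (a + 1) ≤ b / (b + 1) := by
    rw [div_le_div_iff₀ (by positivity) (by positivity)]
    linarith
  simp only [pow_succ_div_pow_eq_mul_div_pow]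
  calc a * (a / (a + 1)) ^ d
      ≤ a * (b / (b + 1)) ^ d := by gcongr
    _ < b * (b / (b + 1)) ^ d := by
        have : 0 < b := ha.trans_lt hab
        gcongr

lemma pow_succ_div_pow_le_self (d : ℕ) {k : ℝ} (hk : 0 ≤ k) :
    k ^ (d + 1) / (k + 1) ^ d ≤ k := by
  rw [pow_succ_div_pow_eq_mul_div_pow]
  refine mul_le_of_le_one_right hk (pow_le_one₀ (by positivity) ?_)
  rw [div_le_one (by positivity)]
  linarith

lemma div_two_pow_le_pow_succ_div_pow (d : ℕ) {k : ℝ} (hk : 1 ≤ k) :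
    k / 2 ^ d ≤ k ^ (d + 1) / (k + 1) ^ d := by
  rw [pow_succ_div_pow_eq_mul_div_pow, div_eq_mul_inv, ← inv_pow]
  gcongr
  rw [le_div_iff₀ (by positivity)]
  linarith

lemma neg_div_add_eq_zero_iff (d : ℕ) {k : ℝ} (hk : 0 ≤ k) :
    -(k ^ (d + 1)) / (d + 1) + (k + 1) ^ d = 0 ↔ k ^ (d + 1) / (k + 1) ^ d = d + 1 := by
  rw [div_eq_iff (by positivity), neg_div, neg_add_eq_zero, div_eq_iff (by positivity), mul_comm]

lemma exists_pow_succ_div_pow_eq (d : ℕ) :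
    ∃ k : ℝ, (d : ℝ) + 1 ≤ k ∧ k ^ (d + 1) / (k + 1) ^ d = d + 1 := by
  set M : ℝ := 2 ^ d * (d + 1)
  have hM : (d : ℝ) + 1 ≤ M := le_mul_of_one_le_left (by positivity) (one_le_pow₀ one_le_two)
  have hcont : ContinuousOn (fun k : ℝ => k ^ (d + 1) / (k + 1) ^ d) (Icc (d + 1) M) :=
    (continuousOn_pow _).div ((continuousOn_id.add continuousOn_const).pow d) fun k hk =>
      pow_ne_zero _ (by linarith [hk.1, d.cast_nonneg (α := ℝ)])
  have hlow := pow_succ_div_pow_le_self d (k := (d : ℝ) + 1) (by positivity)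
  have hhigh := div_two_pow_le_pow_succ_div_pow d (k := M) (by linarith [d.cast_nonneg (α := ℝ)])
  rw [mul_div_cancel_left₀ _ (by positivity)] at hhigh
  obtain ⟨k, ⟨hk, -⟩, hkeq⟩ := intermediate_value_Icc hM hcont ⟨hlow, hhigh⟩
  exact ⟨k, hk, hkeq⟩

theorem stmt_6_general (d : ℕ) :
    ∃ k : ℝ, 0 ≤ k ∧ (-(k ^ (d + 1)) / (d + 1) + (k + 1) ^ d = 0) ∧ (d : ℝ) + 1 ≤ k ∧
      ∀ k' : ℝ, 0 ≤ k' → -(k' ^ (d + 1)) / (d + 1) + (k' + 1) ^ d = 0 → k' = k := by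
  obtain ⟨k, hdk, hk⟩ := exists_pow_succ_div_pow_eq d
  have hk0 : 0 ≤ k := by linarith [d.cast_nonneg (α := ℝ)]
  refine ⟨k, hk0, (neg_div_add_eq_zero_iff d hk0).2 hk, hdk, fun k' hk'0 hk' => ?_⟩
  exact (strictMonoOn_pow_succ_div_pow d).injOn hk'0 hk0
    (((neg_div_add_eq_zero_iff d hk'0).1 hk').trans hk.symm)

theorem stmt_6 (d : ℕ) (hd : 1 ≤ d) :
    ∃ k : ℝ, 0 ≤ k ∧ (-(k ^ (d + 1)) / (d + 1) + (k + 1) ^ d = 0) ∧ (d : ℝ) + 1 ≤ k ∧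
      ∀ k' : ℝ, 0 ≤ k' → -(k' ^ (d + 1)) / (d + 1) + (k' + 1) ^ d = 0 → k' = k :=
  stmt_6_general d
end

section
/- One has min over x > 2 of sup over k > 0 of (k² + x(k + 1 - k²/2)) = 2√3 + 4, the minimum being attained at x = (2√3 + 6)/3, with the inner supremum attained at k = (√3 + 3)/√3 = 1 + √3. -/
/-!
For `x > 2` the objective `k ↦ k² + x (k + 1 - k²/2)` is a downward parabola whose vertex
`k = x / (x - 2)` is positive, so the inner supremum is its vertex value `x + x² / (2 (x - 2))`.
This exceeds `2√3 + 4` by `(3x - 2√3 - 6)² / (6 (x - 2))`, which vanishes exactly at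
`x = (2√3 + 6)/3`, where the vertex is `k = 1 + √3`.
-/

open Real

theorem isGreatest_quadratic_of_neg {a b c : ℝ} (ha : a < 0) (hb : 0 < b) :
    IsGreatest {v : ℝ | ∃ k : ℝ, 0 < k ∧ v = a * k ^ 2 + b * k + c} (c - b ^ 2 / (4 * a)) := by
  have ha' : a ≠ 0 := ha.ne
  refine ⟨⟨-b / (2 * a), div_pos_of_neg_of_neg (by linarith) (by linarith), by field_simp; ring⟩, ?_⟩
  rintro v ⟨k, -, rfl⟩
  have hsq : a * k ^ 2 + b * k + c - (c - b ^ 2 / (4 * a)) = a * (k + b / (2 * a)) ^ 2 := by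
    field_simp; ring
  linarith [mul_nonpos_of_nonpos_of_nonneg ha.le (sq_nonneg (k + b / (2 * a)))]

theorem isGreatest_objective {x : ℝ} (hx : 2 < x) :
    IsGreatest {v : ℝ | ∃ k : ℝ, 0 < k ∧ v = k ^ 2 + x * (k + 1 - k ^ 2 / 2)}
      (x + x ^ 2 / (2 * (x - 2))) := by
  have hform : ∀ k : ℝ, k ^ 2 + x * (k + 1 - k ^ 2 / 2) = (1 - x / 2) * k ^ 2 + x * k + x :=
    fun k => by ring
  have hmax : x - x ^ 2 / (4 * (1 - x / 2)) = x + x ^ 2 / (2 * (x - 2)) := by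
    rw [show 4 * (1 - x / 2) = -(2 * (x - 2)) by ring, div_neg, sub_neg_eq_add]
  simpa only [hform, hmax] using
    isGreatest_quadratic_of_neg (a := 1 - x / 2) (b := x) (c := x) (by linarith) (by linarith)

theorem vertex_value_sub_eq {x : ℝ} (hx : x ≠ 2) :
    x + x ^ 2 / (2 * (x - 2)) - (2 * √3 + 4) = (3 * x - 2 * √3 - 6) ^ 2 / (6 * (x - 2)) := by
  have hx' : x - 2 ≠ 0 := sub_ne_zero.mpr hx
  have hs : √3 ^ 2 = 3 := sq_sqrt (by norm_num)
  field_simp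
  linear_combination -8 * hs

theorem two_mul_sqrt_three_add_four_le {x : ℝ} (hx : 2 < x) :
    2 * √3 + 4 ≤ x + x ^ 2 / (2 * (x - 2)) := by
  have h := vertex_value_sub_eq hx.ne'
  have : 0 ≤ (3 * x - 2 * √3 - 6) ^ 2 / (6 * (x - 2)) := by
    apply div_nonneg (sq_nonneg _); linarith
  linarith

theorem two_lt_optimum : 2 < (2 * √3 + 6) / 3 := by
  have : 0 < √3 := by positivity
  linarith

theorem vertex_value_at_optimum :
    (2 * √3 + 6) / 3 + ((2 * √3 + 6) / 3) ^ 2 / (2 * ((2 * √3 + 6) / 3 - 2)) = 2 * √3 + 4 := by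
  have h := vertex_value_sub_eq two_lt_optimum.ne'
  have hzero : 3 * ((2 * √3 + 6) / 3) - 2 * √3 - 6 = 0 := by ring
  rw [hzero, zero_pow two_ne_zero, zero_div] at h
  linarith

theorem stmt_7 :
    (∀ x : ℝ, 2 < x →
      2 * Real.sqrt 3 + 4 ≤
        sSup {v : ℝ | ∃ k : ℝ, 0 < k ∧ v = k ^ 2 + x * (k + 1 - k ^ 2 / 2)}) ∧
    sSup {v : ℝ | ∃ k : ℝ, 0 < k ∧
        v = k ^ 2 + ((2 * Real.sqrt 3 + 6) / 3) * (k + 1 - k ^ 2 / 2)} =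
      2 * Real.sqrt 3 + 4 ∧
    (Real.sqrt 3 + 3) / Real.sqrt 3 = 1 + Real.sqrt 3 ∧
    (1 + Real.sqrt 3) ^ 2 +
        ((2 * Real.sqrt 3 + 6) / 3) *
          ((1 + Real.sqrt 3) + 1 - (1 + Real.sqrt 3) ^ 2 / 2) =
      2 * Real.sqrt 3 + 4 := by
  have hs : √3 ^ 2 = 3 := sq_sqrt (by norm_num)
  have hs0 : √3 ≠ 0 := by positivity
  refine ⟨fun x hx => ?_, ?_, ?_, ?_⟩
  · rw [(isGreatest_objective hx).csSup_eq]
    exact two_mul_sqrt_three_add_four_le hx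
  · rw [(isGreatest_objective two_lt_optimum).csSup_eq, vertex_value_at_optimum]
  · field_simp
    linear_combination -hs
  · linear_combination (-√3 / 3) * hs
end

section
/- For a natural number i ≥ 1, define g_i : (0,1) → ℝ by g_i(λ) = (λ + (1-λ) (1/2)^{i+1}) / ((1/2 + λ/2)^{i+1}). Then g_i attains its maximum on (0,1) at λ*_i = (2^{i+1} - i - 2)/(i·2^{i+1} - i), and the maximum value equals i^i (2^{i+1} - 1)^{i+1} / (2^i (i+1)^{i+1} (2^i - 1)^i). -/
/-!
With `s = 1 + λ`, `g_i(λ) = 2^(i+1) (a s - b) / s^(i+1)` where `a = 1 - 2^(-i-1)` and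
`b = 1 - 2^(-i)`. Such a ratio of an affine function and a power is maximised at the point `s₀`
of tangency `a s₀ = (i+1)(a s₀ - b)`: writing `s = s₀ t`, the numerator becomes
`(a s₀ - b)(1 + (i+1)(t-1))`, which Bernoulli's inequality bounds by `(a s₀ - b) t^(i+1)`.
Solving the tangency condition gives `λ*_i = s₀ - 1`.
-/

theorem affine_div_pow_le_of_tangent {n : ℕ} {a b s₀ s : ℝ} (hs₀ : 0 < s₀) (hs : 0 < s)
    (hm : 0 ≤ a * s₀ - b) (htangent : a * s₀ = n * (a * s₀ - b)) :
    (a * s - b) / s ^ n ≤ (a * s₀ - b) / s₀ ^ n := by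
  set t := s / s₀ with ht
  have hs_eq : s = s₀ * t := by rw [ht]; field_simp
  have hlin : a * s - b = (a * s₀ - b) * (1 + n * (t - 1)) := by
    rw [hs_eq]; linear_combination (t - 1) * htangent
  have hbernoulli : 1 + n * (t - 1) ≤ t ^ n := by
    simpa using one_add_mul_le_pow (a := t - 1) (by linarith [div_pos hs hs₀]) n
  rw [div_le_div_iff₀ (pow_pos hs n) (pow_pos hs₀ n), hlin, hs_eq, mul_pow]
  calc (a * s₀ - b) * (1 + n * (t - 1)) * s₀ ^ n ≤ (a * s₀ - b) * t ^ n * s₀ ^ n := by gcongr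
    _ = (a * s₀ - b) * (s₀ ^ n * t ^ n) := by ring

noncomputable def monomialRatio (i : ℕ) (lam : ℝ) : ℝ :=
  (lam + (1 - lam) * (1 / 2) ^ (i + 1)) / ((1 / 2 + lam / 2) ^ (i + 1))

noncomputable def monomialArgmax (i : ℕ) : ℝ :=
  (2 ^ (i + 1) - (i : ℝ) - 2) / ((i : ℝ) * 2 ^ (i + 1) - i)

theorem monomialRatio_eq (i : ℕ) (lam : ℝ) :
    monomialRatio i lam = 2 ^ (i + 1) *
      (((1 - (1 / 2) ^ (i + 1)) * (1 + lam) - (1 - 2 * (1 / 2) ^ (i + 1))) / (1 + lam) ^ (i + 1)) := by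
  rw [monomialRatio, show (1 / 2 + lam / 2 : ℝ) = (1 + lam) / 2 by ring, div_pow (1 + lam),
    div_div_eq_mul_div, mul_div_assoc', mul_comm]
  ring

theorem monomialArgmax_eq (i : ℕ) :
    monomialArgmax i = (2 * 2 ^ i - i - 2) / (i * (2 * 2 ^ i - 1)) := by
  rw [monomialArgmax, pow_succ']
  ring

theorem two_le_two_pow {i : ℕ} (hi : 1 ≤ i) : (2 : ℝ) ≤ 2 ^ i := by
  simpa using pow_le_pow_right₀ (by norm_num : (1 : ℝ) ≤ 2) hi

theorem monomialArgmax_mem_Ioo {i : ℕ} (hi : 1 ≤ i) : monomialArgmax i ∈ Set.Ioo 0 1 := by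
  have hp := two_le_two_pow hi
  have hip : (i : ℝ) < 2 ^ i := by exact_mod_cast Nat.lt_two_pow_self
  have hi' : (1 : ℝ) ≤ i := by exact_mod_cast hi
  have hden : 0 < (i : ℝ) * (2 * 2 ^ i - 1) := mul_pos (by linarith) (by linarith)
  rw [monomialArgmax_eq]
  exact ⟨div_pos (by linarith) hden, (div_lt_one hden).2 (by nlinarith)⟩

theorem monomialArgmax_tangent {i : ℕ} (hi : 1 ≤ i) :
    (1 - (1 / 2 : ℝ) ^ (i + 1)) * (1 + monomialArgmax i) = ((i + 1 : ℕ) : ℝ) *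
      ((1 - (1 / 2) ^ (i + 1)) * (1 + monomialArgmax i) - (1 - 2 * (1 / 2) ^ (i + 1))) := by
  have hi₀ : (i : ℝ) ≠ 0 := by positivity
  have h2p : (2 * 2 ^ i - 1 : ℝ) ≠ 0 := by linarith [two_le_two_pow hi]
  rw [monomialArgmax_eq, one_div_pow, pow_succ']
  push_cast
  field_simp
  ring

theorem monomialRatio_argmax {i : ℕ} (hi : 1 ≤ i) :
    monomialRatio i (monomialArgmax i) =
      (i : ℝ) ^ i * (2 ^ (i + 1) - 1) ^ (i + 1) /
        (2 ^ i * ((i : ℝ) + 1) ^ (i + 1) * (2 ^ i - 1) ^ i) := by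
  have hi₀ : (i : ℝ) ≠ 0 := by positivity
  have hp : (2 : ℝ) ≤ 2 ^ i := two_le_two_pow hi
  have hp₁ : (2 ^ i - 1 : ℝ) ≠ 0 := by linarith
  have h2p₁ : (2 * 2 ^ i - 1 : ℝ) ≠ 0 := by linarith
  have hnum : monomialArgmax i + (1 - monomialArgmax i) * (1 / 2) ^ (i + 1) =
      (2 ^ i - 1) / (i * 2 ^ i) := by
    rw [monomialArgmax_eq, one_div_pow, pow_succ']
    field_simp
    ring
  have hbase : 1 / 2 + monomialArgmax i / 2 = (i + 1) * (2 ^ i - 1) / (i * (2 * 2 ^ i - 1)) := by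
    rw [monomialArgmax_eq]
    field_simp
    ring
  rw [monomialRatio, hnum, hbase, div_pow, mul_pow, mul_pow, pow_succ 2 i]
  field_simp
  ring

theorem monomialRatio_le_argmax {i : ℕ} (hi : 1 ≤ i) {lam : ℝ} (hlam : -1 < lam) :
    monomialRatio i lam ≤ monomialRatio i (monomialArgmax i) := by
  obtain ⟨hpos, hlt⟩ := monomialArgmax_mem_Ioo hi
  have hc : (0 : ℝ) < (1 / 2) ^ (i + 1) := by positivity
  rw [monomialRatio_eq, monomialRatio_eq]
  refine mul_le_mul_of_nonneg_left (affine_div_pow_le_of_tangent (by linarith) (by linarith) ?_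
    (monomialArgmax_tangent hi)) (by positivity)
  nlinarith

theorem stmt_9 (i : ℕ) (hi : 1 ≤ i) :
    let g : ℝ → ℝ := fun lam =>
      (lam + (1 - lam) * (1 / 2) ^ (i + 1)) / ((1 / 2 + lam / 2) ^ (i + 1))
    let lamStar : ℝ := (2 ^ (i + 1) - (i : ℝ) - 2) / ((i : ℝ) * 2 ^ (i + 1) - i)
    lamStar ∈ Set.Ioo (0 : ℝ) 1 ∧
    g lamStar =
      (i : ℝ) ^ i * (2 ^ (i + 1) - 1) ^ (i + 1) /
        (2 ^ i * ((i : ℝ) + 1) ^ (i + 1) * (2 ^ i - 1) ^ i) ∧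
    ∀ lam ∈ Set.Ioo (0 : ℝ) 1, g lam ≤ g lamStar :=
  ⟨monomialArgmax_mem_Ioo hi, monomialRatio_argmax hi,
    fun _ hlam => monomialRatio_le_argmax hi (by linarith [hlam.1])⟩
end

section
/- Define M_i := i^i (2^{i+1} - 1)^{i+1} / (2^i (i+1)^{i+1} (2^i - 1)^i) for natural numbers i ≥ 1. Then the sequence (M_i) is non-decreasing: M_{i+1} ≥ M_i for all i ≥ 1. -/
/-!
Write `x = i` and `A = 2 ^ i`. After clearing denominators, `M_i ≤ M_{i+1}` splits into
`(x (x + 2) (2A - 1)²) ^ i ≤ ((x + 1)² (4A - 1)(A - 1)) ^ i` and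
`2 (x + 2)² (2A - 1)² ≤ (x + 1)² (4A - 1)²`.
In the first, the deficit `(4A - 1)(A - 1) = (2A - 1)² - A` is paid for by
`(x + 1)² = x (x + 2) + 1`, which works as soon as `x² + 2x + 5 ≤ 4A`. The second combines
`(x + 2)² ≤ 2 (x + 1)²` (true for `x ≥ 2`) with `4 (2A - 1)² ≤ (4A - 1)²`.
The case `i = 1` is a numerical check.
-/

lemma sq_add_two_mul_add_five_le_two_pow {i : ℕ} (hi : 1 ≤ i) :
    i ^ 2 + 2 * i + 5 ≤ 2 ^ (i + 2) := by
  induction i, hi using Nat.le_induction with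
  | base => norm_num
  | succ n _ ih =>
    rw [show n + 1 + 2 = n + 2 + 1 by ring, pow_succ 2 (n + 2)]
    nlinarith

lemma mul_add_two_mul_sq_le {x A : ℝ} (hA : 0 ≤ A) (h : x ^ 2 + 2 * x + 5 ≤ 4 * A) :
    x * (x + 2) * (2 * A - 1) ^ 2 ≤ (x + 1) ^ 2 * ((4 * A - 1) * (A - 1)) := by
  nlinarith [mul_nonneg hA (sub_nonneg.2 h)]

lemma two_mul_add_two_sq_mul_le {x A : ℝ} (hx : 2 ≤ x) (hA : 1 ≤ A) :
    2 * (x + 2) ^ 2 * (2 * A - 1) ^ 2 ≤ (x + 1) ^ 2 * (4 * A - 1) ^ 2 := by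
  have hx' : 2 * (x + 2) ^ 2 ≤ 4 * (x + 1) ^ 2 := by nlinarith
  have hA' : 4 * (2 * A - 1) ^ 2 ≤ (4 * A - 1) ^ 2 := by nlinarith
  calc 2 * (x + 2) ^ 2 * (2 * A - 1) ^ 2 ≤ 4 * (x + 1) ^ 2 * (2 * A - 1) ^ 2 := by gcongr
    _ = (x + 1) ^ 2 * (4 * (2 * A - 1) ^ 2) := by ring
    _ ≤ (x + 1) ^ 2 * (4 * A - 1) ^ 2 := by gcongr

lemma cross_mul_le_of_sq_add_two_mul_add_five_le (i : ℕ) {x A : ℝ} (hx : 2 ≤ x) (h : x ^ 2 + 2 * x + 5 ≤ 4 * A) :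
    x ^ i * (2 * A - 1) ^ (i + 1) * (2 * A * (x + 2) ^ (i + 2) * (2 * A - 1) ^ (i + 1)) ≤
      (x + 1) ^ (i + 1) * (4 * A - 1) ^ (i + 2) * (A * (x + 1) ^ (i + 1) * (A - 1) ^ i) := by
  have hA : 1 ≤ A := by nlinarith
  have hpow : (x * (x + 2) * (2 * A - 1) ^ 2) ^ i ≤ ((x + 1) ^ 2 * ((4 * A - 1) * (A - 1))) ^ i :=
    pow_le_pow_left₀ (by positivity) (mul_add_two_mul_sq_le (by linarith) h) i
  have hsq := two_mul_add_two_sq_mul_le hx hA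
  have hrhs : 0 ≤ ((x + 1) ^ 2 * ((4 * A - 1) * (A - 1))) ^ i :=
    pow_nonneg (mul_nonneg (sq_nonneg _) (mul_nonneg (by linarith) (by linarith))) i
  calc x ^ i * (2 * A - 1) ^ (i + 1) * (2 * A * (x + 2) ^ (i + 2) * (2 * A - 1) ^ (i + 1))
        = A * ((x * (x + 2) * (2 * A - 1) ^ 2) ^ i * (2 * (x + 2) ^ 2 * (2 * A - 1) ^ 2)) := by
          simp only [mul_pow, ← pow_mul]; ring
    _ ≤ A * (((x + 1) ^ 2 * ((4 * A - 1) * (A - 1))) ^ i * ((x + 1) ^ 2 * (4 * A - 1) ^ 2)) := by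
          gcongr
    _ = (x + 1) ^ (i + 1) * (4 * A - 1) ^ (i + 2) * (A * (x + 1) ^ (i + 1) * (A - 1) ^ i) := by
          simp only [mul_pow, ← pow_mul]; ring

theorem stmt_11 (i : ℕ) (hi : 1 ≤ i) :
    (i : ℝ) ^ i * (2 ^ (i + 1) - 1) ^ (i + 1) /
        (2 ^ i * ((i : ℝ) + 1) ^ (i + 1) * (2 ^ i - 1) ^ i) ≤
      ((i : ℝ) + 1) ^ (i + 1) * (2 ^ (i + 2) - 1) ^ (i + 2) /
        (2 ^ (i + 1) * ((i : ℝ) + 2) ^ (i + 2) * (2 ^ (i + 1) - 1) ^ (i + 1)) := by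
  obtain rfl | hi2 := hi.eq_or_lt
  · norm_num
  have hx : (2 : ℝ) ≤ i := by exact_mod_cast hi2
  have two_pow_sub_one_pos : ∀ k, k ≠ 0 → (0 : ℝ) < 2 ^ k - 1 := fun _ hk =>
    sub_pos.2 (one_lt_pow₀ one_lt_two hk)
  have h : (i : ℝ) ^ 2 + 2 * i + 5 ≤ 4 * 2 ^ i := by
    have h' : (i : ℝ) ^ 2 + 2 * i + 5 ≤ 2 ^ (i + 2) := by
      exact_mod_cast sq_add_two_mul_add_five_le_two_pow hi
    linear_combination h'
  rw [div_le_div_iff₀ (by have := two_pow_sub_one_pos i (by omega); positivity)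
    (by have := two_pow_sub_one_pos (i + 1) (by omega); positivity)]
  linear_combination cross_mul_le_of_sq_add_two_mul_add_five_le i hx h
end
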